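/- For the Tribonacci-Lucas numbers, the determinant det[[K(n+2),K(n+1),K(n)],[K(n+1),K(n),K(n-1)],[K(n),K(n-1),K(n-2)]] equals −44 for all integers n. -/

import Mathlib

/-!
For any sequence satisfying the Tribonacci recurrence, the shifted Hankel matrix is the
companion matrix of `X ^ 3 - X ^ 2 - X - 1` times the unshifted one, and that companion matrix
has determinant `1`. So the determinant does not depend on `n` and can be evaluated at `n = 0`,
after running the recurrence backwards to get `K (-1) = K (-2) = -1`.
-/

variable {R : Type*} [CommRing R]

def hankel3 (a : ℤ → R) (n : ℤ) : Matrix (Fin 3) (Fin 3) R :=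
  !![a (n + 2), a (n + 1), a n;
     a (n + 1), a n, a (n - 1);
     a n, a (n - 1), a (n - 2)]

/-- Companion matrix of `X ^ 3 - X ^ 2 - X - 1`. -/
def tribonacciCompanion : Matrix (Fin 3) (Fin 3) R :=
  !![1, 1, 1;
     1, 0, 0;
     0, 1, 0]

theorem det_tribonacciCompanion : (tribonacciCompanion : Matrix (Fin 3) (Fin 3) R).det = 1 := by
  simp [tribonacciCompanion, Matrix.det_fin_three]

section Recurrence

variable {a : ℤ → R} (ha : ∀ n : ℤ, a n = a (n - 1) + a (n - 2) + a (n - 3))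
include ha

theorem hankel3_add_one (n : ℤ) :
    hankel3 a (n + 1) = tribonacciCompanion * hankel3 a n := by
  have h3 := ha (n + 3)
  have h2 := ha (n + 2)
  have h1 := ha (n + 1)
  ext i j
  fin_cases i <;> fin_cases j <;>
    simp [hankel3, tribonacciCompanion, Matrix.mul_apply, Fin.sum_univ_three] <;>
    ring_nf at h1 h2 h3 ⊢ <;> assumption

theorem det_hankel3_add_one (n : ℤ) : (hankel3 a (n + 1)).det = (hankel3 a n).det := by
  rw [hankel3_add_one ha, Matrix.det_mul, det_tribonacciCompanion, one_mul]

theorem det_hankel3_eq_det_hankel3_zero (n : ℤ) : (hankel3 a n).det = (hankel3 a 0).det := by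
  simpa using (Function.Periodic.int_mul_eq (f := fun m => (hankel3 a m).det) (c := 1)
    (det_hankel3_add_one ha)) n

end Recurrence

theorem tribonacciLucas_det (K : ℤ → ℤ) (h0 : K 0 = 3) (h1 : K 1 = 1) (h2 : K 2 = 3)
    (hrec : ∀ n : ℤ, K n = K (n - 1) + K (n - 2) + K (n - 3)) :
    ∀ n : ℤ,
      Matrix.det !![K (n + 2), K (n + 1), K n;
                    K (n + 1), K n, K (n - 1);
                    K n, K (n - 1), K (n - 2)] = -44 := by
  have hm1 : K (-1) = -1 := by
    have h := hrec 2
    norm_num [h0, h1, h2] at h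
    linarith
  have hm2 : K (-2) = -1 := by
    have h := hrec 1
    norm_num [h0, h1, hm1] at h
    linarith
  intro n
  change (hankel3 K n).det = -44
  rw [det_hankel3_eq_det_hankel3_zero hrec]
  simp [hankel3, Matrix.det_fin_three, h0, h1, h2, hm1, hm2]
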